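/- Two featured graphs (A,X) and (B,Y), each on n vertices with features in ℝ^d, are 1-WL equivalent if and only if they admit a common stable partition: there exist a stable partition P₁,…,P_k of (A,X) and a stable partition Q₁,…,Q_k of (B,Y) such that |P_t| = |Q_t| for all t, all vertices in P_t ∪ Q_t have the same feature vector, and for all t, l, every u ∈ P_t and v ∈ Q_t satisfy |N_G(u) ∩ P_l| = |N_H(v) ∩ Q_l| (G, H the underlying simple graphs). -/

import Mathlib

/-- A featured graph on `n` vertices: an adjacency matrix of a simple graph
(symmetric, 0/1 entries, zero diagonal) together with node features in `ℝ^d`. -/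
structure FeaturedGraph (n d : ℕ) where
  A : Matrix (Fin n) (Fin n) ℝ
  X : Fin n → EuclideanSpace ℝ (Fin d)
  isSymm : A.IsSymm
  zeroOne : ∀ i j, A i j = 0 ∨ A i j = 1
  loopless : ∀ i, A i i = 0

open Classical in
/-- The neighbor set of `u` in the simple graph with adjacency matrix `A`. -/
noncomputable def nbrs {n : ℕ} (A : Matrix (Fin n) (Fin n) ℝ) (u : Fin n) : Finset (Fin n) :=
  Finset.univ.filter fun z => A u z = 1

open Classical in
/-- The color refinement (1-WL) sequence of relations, for a vertex type `V` with
neighbor sets `N` and features `X`: `r 0 u v ↔ X u = X v`, and `r (t+1) u v` iff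
`r t u v` and for every `w`, `u` and `v` have equally many neighbors `z` with `r t z w`. -/
noncomputable def colorRefine {V F : Type*} (N : V → Finset V) (X : V → F) :
    ℕ → V → V → Prop
  | 0 => fun u v => X u = X v
  | t + 1 => fun u v => colorRefine N X t u v ∧
      ∀ w, ((N u).filter fun z => colorRefine N X t z w).card =
           ((N v).filter fun z => colorRefine N X t z w).card


/-- Neighbor sets in the disjoint union of the graphs given by `A` and `B`. -/
noncomputable def sumNbrs {n : ℕ} (A B : Matrix (Fin n) (Fin n) ℝ) :
    Fin n ⊕ Fin n → Finset (Fin n ⊕ Fin n)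
  | Sum.inl i => (nbrs A i).image Sum.inl
  | Sum.inr j => (nbrs B j).image Sum.inr

open Classical in
/-- Two featured graphs are 1-WL equivalent if every class of the stable color
refinement relation `r (2n)` on their disjoint union contains exactly as many
left-side as right-side vertices. -/
noncomputable def WLEquiv {n d : ℕ} (G H : FeaturedGraph n d) : Prop :=
  ∀ w : Fin n ⊕ Fin n,
    (Finset.univ.filter fun i : Fin n =>
      colorRefine (sumNbrs G.A H.A) (Sum.elim G.X H.X) (2 * n) (Sum.inl i) w).card =
    (Finset.univ.filter fun j : Fin n =>
      colorRefine (sumNbrs G.A H.A) (Sum.elim G.X H.X) (2 * n) (Sum.inr j) w).card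

/-- A stable partition of a featured graph: a partition of the vertices into
nonempty parts such that vertices in the same part have the same feature and the
same number of neighbors in every part. -/
def IsStablePartition {n d k : ℕ} (G : FeaturedGraph n d) (P : Fin k → Finset (Fin n)) : Prop :=
  (∀ t, (P t).Nonempty) ∧ (∀ i : Fin n, ∃! t, i ∈ P t) ∧
    ∀ t, ∀ u ∈ P t, ∀ v ∈ P t, G.X u = G.X v ∧
      ∀ l, (nbrs G.A u ∩ P l).card = (nbrs G.A v ∩ P l).card

/-!
Both conditions amount to a surjective *stable coloring* `c : Fin n ⊕ Fin n → Fin k` of the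
disjoint union (same features and same number of neighbours of each color within a color class)
which is *balanced*: every color is used equally often on the two sides. The parts of a common
stable partition are exactly the color classes of such a coloring on either side.

Color refinement never separates two vertices of the same color of a stable coloring, so every
class of `r (2n)` is a union of color classes and inherits the balance. Conversely, as long as
refinement is not stable the number of classes grows strictly, and it is bounded by the
`2n` vertices, so `r (2n + 1) = r (2n)`; then the classes of `r (2n)` form a stable coloring,
and 1-WL equivalence says precisely that it is balanced.
-/

open Finset Function

section ColorRefinement

variable {V F : Type*} (N : V → Finset V) (X : V → F)

open Classical in
theorem colorRefine_succ_iff {t : ℕ} {u v : V} :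
    colorRefine N X (t + 1) u v ↔ colorRefine N X t u v ∧
      ∀ w, #{z ∈ N u | colorRefine N X t z w} = #{z ∈ N v | colorRefine N X t z w} := by
  rw [colorRefine]

theorem colorRefine_equivalence (t : ℕ) : Equivalence (colorRefine N X t) := by
  induction t with
  | zero => exact ⟨fun _ => rfl, Eq.symm, Eq.trans⟩
  | succ t ih =>
    have step := @colorRefine_succ_iff _ _ N X t
    exact ⟨fun u => step.2 ⟨ih.refl u, fun _ => rfl⟩,
      fun h => step.2 ⟨ih.symm (step.1 h).1, fun w => ((step.1 h).2 w).symm⟩,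
      fun h h' => step.2 ⟨ih.trans (step.1 h).1 (step.1 h').1,
        fun w => ((step.1 h).2 w).trans ((step.1 h').2 w)⟩⟩

theorem colorRefine_antitone : Antitone (colorRefine N X) :=
  antitone_nat_of_succ_le fun _ _ _ h => ((colorRefine_succ_iff N X).1 h).1

theorem colorRefine_feature {t : ℕ} {u v : V} (h : colorRefine N X t u v) : X u = X v :=
  colorRefine_antitone N X t.zero_le u v h

def colorRefineSetoid (t : ℕ) : Setoid V := ⟨colorRefine N X t, colorRefine_equivalence N X t⟩

theorem colorRefineSetoid_mk_eq_iff {t : ℕ} {u v : V} :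
    Quotient.mk (colorRefineSetoid N X t) u = Quotient.mk _ v ↔ colorRefine N X t u v :=
  Quotient.eq

theorem colorRefine_succ_succ_eq {t : ℕ} (h : colorRefine N X (t + 1) = colorRefine N X t) :
    colorRefine N X (t + 2) = colorRefine N X (t + 1) := by
  funext u v
  refine propext <| (colorRefine_succ_iff N X).trans <| and_iff_left_of_imp fun huv w => ?_
  rw [h]
  exact ((colorRefine_succ_iff N X).1 huv).2 w

theorem colorRefine_succ_eq_of_le {t s : ℕ} (h : colorRefine N X (t + 1) = colorRefine N X t)
    (hts : t ≤ s) : colorRefine N X (s + 1) = colorRefine N X s :=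
  Nat.le_induction h (fun _ _ => colorRefine_succ_succ_eq N X) s hts

open Classical in
theorem card_quotient_lt_of_succ_ne [Fintype V] {t : ℕ}
    (h : colorRefine N X (t + 1) ≠ colorRefine N X t) :
    Fintype.card (Quotient (colorRefineSetoid N X t)) <
      Fintype.card (Quotient (colorRefineSetoid N X (t + 1))) := by
  obtain ⟨u, v, huv, hsplit⟩ : ∃ u v, colorRefine N X t u v ∧ ¬ colorRefine N X (t + 1) u v := by
    by_contra! hle
    exact h (le_antisymm (colorRefine_antitone N X t.le_succ) hle)
  let coarsen := Setoid.map_of_le (s := colorRefineSetoid N X (t + 1))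
    (t := colorRefineSetoid N X t) fun _ _ h => ((colorRefine_succ_iff N X).1 h).1
  refine Fintype.card_lt_of_surjective_not_injective coarsen ?_ fun hinj => hsplit ?_
  · exact Quotient.ind fun v => ⟨⟦v⟧, rfl⟩
  · exact Quotient.exact (@hinj ⟦u⟧ ⟦v⟧ (Quotient.sound huv))

open Classical in
theorem colorRefine_succ_eq_of_card_le [Fintype V] {t : ℕ} (ht : Fintype.card V ≤ t) :
    colorRefine N X (t + 1) = colorRefine N X t := by
  suffices ∃ s ≤ Fintype.card V, colorRefine N X (s + 1) = colorRefine N X s by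
    obtain ⟨s, hs, hstable⟩ := this
    exact colorRefine_succ_eq_of_le N X hstable (hs.trans ht)
  by_contra! hunstable
  have hgrow (s : ℕ) (hs : s ≤ Fintype.card V + 1) :
      s ≤ Fintype.card (Quotient (colorRefineSetoid N X s)) := by
    induction s with
    | zero => exact Nat.zero_le _
    | succ s ih =>
      exact (ih (by omega)).trans_lt (card_quotient_lt_of_succ_ne N X (hunstable s (by omega)))
  have hbound := Fintype.card_le_of_surjective _
    (Quotient.mk_surjective (s := colorRefineSetoid N X (Fintype.card V + 1)))
  exact Nat.not_succ_le_self _ ((hgrow _ le_rfl).trans hbound)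

end ColorRefinement

theorem card_filter_eq_sum_card_fiber {α ι : Type*} [DecidableEq ι] (c : α → ι) {p : α → Prop}
    [DecidablePred p] (T : Finset ι) (hT : ∀ a, p a ↔ c a ∈ T) (s : Finset α) :
    #{a ∈ s | p a} = ∑ i ∈ T, #{a ∈ s | c a = i} := by
  rw [sum_card_fiberwise_eq_card_filter]
  exact congrArg card (filter_congr fun a _ => hT a)

theorem mem_image_filter_iff_of_fiber_invariant {α ι : Type*} [Fintype α] [DecidableEq ι]
    (c : α → ι) {p : α → Prop} [DecidablePred p] (hp : ∀ a b, c a = c b → p b → p a) (a : α) :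
    c a ∈ image c {b | p b} ↔ p a := by
  refine ⟨fun h => ?_, fun h => mem_image_of_mem c (by simpa using h)⟩
  obtain ⟨b, hb, hba⟩ := mem_image.1 h
  exact hp a b hba.symm (mem_filter.1 hb).2

theorem exists_eq_fibers {α ι : Type*} [Fintype α] [DecidableEq ι] {P : ι → Finset α}
    (h : ∀ a, ∃! i, a ∈ P i) : ∃ p : α → ι, P = fun i => ({a | p a = i} : Finset α) := by
  choose p hp hunique using h
  refine ⟨p, funext fun i => ?_⟩
  ext a
  simpa using ⟨fun h => (hunique a i h).symm, fun h => h ▸ hp a⟩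

section StableColoring

variable {V F ι : Type*} (N : V → Finset V) (X : V → F) [DecidableEq ι]

def IsStableColoring (c : V → ι) : Prop :=
  ∀ u v, c u = c v → X u = X v ∧ ∀ i, #{z ∈ N u | c z = i} = #{z ∈ N v | c z = i}

variable {N X}

theorem IsStableColoring.comp_equiv {κ : Type*} [DecidableEq κ] {c : V → ι}
    (hc : IsStableColoring N X c) (e : ι ≃ κ) : IsStableColoring N X (e ∘ c) := by
  intro u v huv
  obtain ⟨hX, hN⟩ := hc u v (e.injective huv)
  refine ⟨hX, fun l => ?_⟩
  simpa only [comp_apply, ← e.eq_symm_apply] using hN (e.symm l)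

open Classical in
theorem isStableColoring_mk_of_succ_eq {t : ℕ}
    (h : colorRefine N X (t + 1) = colorRefine N X t) :
    IsStableColoring N X (Quotient.mk (colorRefineSetoid N X t)) := by
  intro u v huv
  have huv : colorRefine N X (t + 1) u v := h ▸ (colorRefineSetoid_mk_eq_iff N X).1 huv
  refine ⟨colorRefine_feature N X huv, Quotient.ind fun w => ?_⟩
  simpa only [colorRefineSetoid_mk_eq_iff] using ((colorRefine_succ_iff N X).1 huv).2 w

open Classical in
theorem colorRefine_of_isStableColoring [Fintype V] {c : V → ι} (hc : IsStableColoring N X c)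
    (t : ℕ) {u v : V} (huv : c u = c v) : colorRefine N X t u v := by
  induction t generalizing u v with
  | zero => exact (hc u v huv).1
  | succ t ih =>
    refine (colorRefine_succ_iff N X).2 ⟨ih huv, fun w => ?_⟩
    -- by `ih` the class of `w` is a union of color classes, so counts into it add up over them
    have hT z := (mem_image_filter_iff_of_fiber_invariant c (p := (colorRefine N X t · w))
      (fun a b hab => (colorRefine_equivalence N X t).trans (ih hab)) z).symm
    rw [card_filter_eq_sum_card_fiber c _ hT, card_filter_eq_sum_card_fiber c _ hT]
    exact sum_congr rfl fun i _ => (hc u v huv).2 i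

end StableColoring

section Balanced

variable {α β ι : Type*} [Fintype α] [Fintype β] [DecidableEq ι]

def IsBalanced (c : α ⊕ β → ι) : Prop :=
  ∀ i, #{a | c (.inl a) = i} = #{b | c (.inr b) = i}

theorem IsBalanced.surjective_comp_inl_and_inr {c : α ⊕ β → ι} (hbal : IsBalanced c)
    (hc : Surjective c) : Surjective (c ∘ .inl) ∧ Surjective (c ∘ .inr) := by
  have hside (i : ι) : (∃ a, c (.inl a) = i) ↔ ∃ b, c (.inr b) = i := by
    simpa [card_pos, Finset.Nonempty] using congrArg (0 < ·) (hbal i)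
  refine ⟨fun i => ?_, fun i => ?_⟩ <;> obtain ⟨a | b, rfl⟩ := hc i
  exacts [⟨a, rfl⟩, (hside _).2 ⟨b, rfl⟩, (hside _).1 ⟨a, rfl⟩, ⟨b, rfl⟩]

end Balanced

section DisjointUnion

variable {n d : ℕ}

@[simp]
theorem card_filter_sumNbrs_inl (A B : Matrix (Fin n) (Fin n) ℝ) (i : Fin n)
    (p : Fin n ⊕ Fin n → Prop) [DecidablePred p] :
    #{z ∈ sumNbrs A B (.inl i) | p z} = #{j ∈ nbrs A i | p (.inl j)} := by
  rw [sumNbrs, filter_image, card_image_of_injective _ Sum.inl_injective]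

@[simp]
theorem card_filter_sumNbrs_inr (A B : Matrix (Fin n) (Fin n) ℝ) (i : Fin n)
    (p : Fin n ⊕ Fin n → Prop) [DecidablePred p] :
    #{z ∈ sumNbrs A B (.inr i) | p z} = #{j ∈ nbrs B i | p (.inr j)} := by
  rw [sumNbrs, filter_image, card_image_of_injective _ Sum.inr_injective]

theorem isStableColoring_sumElim_iff {F ι : Type*} [DecidableEq ι]
    (A B : Matrix (Fin n) (Fin n) ℝ) (X Y : Fin n → F) (p q : Fin n → ι) :
    IsStableColoring (sumNbrs A B) (Sum.elim X Y) (Sum.elim p q) ↔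
      IsStableColoring (nbrs A) X p ∧ IsStableColoring (nbrs B) Y q ∧
        ∀ u v, p u = q v → X u = Y v ∧
          ∀ l, #{z ∈ nbrs A u | p z = l} = #{z ∈ nbrs B v | q z = l} := by
  simp only [IsStableColoring, Sum.forall, Sum.elim_inl, Sum.elim_inr, card_filter_sumNbrs_inl,
    card_filter_sumNbrs_inr]
  constructor
  · intro h
    exact ⟨fun u => (h.1 u).1, fun v => (h.2 v).2, fun u => (h.1 u).2⟩
  · rintro ⟨hPP, hQQ, hPQ⟩
    refine ⟨fun u => ⟨hPP u, hPQ u⟩, fun v => ⟨fun u hvu => ?_, hQQ v⟩⟩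
    obtain ⟨hX, hN⟩ := hPQ u v hvu.symm
    exact ⟨hX.symm, fun i => (hN i).symm⟩

open Classical in
theorem wlEquiv_of_isStableColoring {ι : Type*} [DecidableEq ι] {G H : FeaturedGraph n d}
    {c : Fin n ⊕ Fin n → ι} (hc : IsStableColoring (sumNbrs G.A H.A) (Sum.elim G.X H.X) c)
    (hbal : IsBalanced c) : WLEquiv G H := by
  intro w
  have hT z := (mem_image_filter_iff_of_fiber_invariant c
    (p := (colorRefine (sumNbrs G.A H.A) (Sum.elim G.X H.X) (2 * n) · w))
    (fun a b hab => (colorRefine_equivalence _ _ _).trans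
      (colorRefine_of_isStableColoring hc _ hab)) z).symm
  rw [card_filter_eq_sum_card_fiber (c ∘ .inl) _ (fun i => hT (.inl i)),
    card_filter_eq_sum_card_fiber (c ∘ .inr) _ (fun j => hT (.inr j))]
  exact sum_congr rfl fun i _ => hbal i

open Classical in
theorem exists_isStableColoring_of_wlEquiv {G H : FeaturedGraph n d} (h : WLEquiv G H) :
    ∃ (k : ℕ) (c : Fin n ⊕ Fin n → Fin k), Surjective c ∧
      IsStableColoring (sumNbrs G.A H.A) (Sum.elim G.X H.X) c ∧ IsBalanced c := by
  let s := colorRefineSetoid (sumNbrs G.A H.A) (Sum.elim G.X H.X) (2 * n)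
  have hstable := colorRefine_succ_eq_of_card_le (sumNbrs G.A H.A) (Sum.elim G.X H.X)
    (t := 2 * n) (by simp [two_mul])
  let e := Fintype.equivFin (Quotient s)
  have hsurj : Surjective (e ∘ Quotient.mk s) := e.surjective.comp Quotient.mk_surjective
  refine ⟨_, e ∘ Quotient.mk s, hsurj, (isStableColoring_mk_of_succ_eq hstable).comp_equiv e,
    fun i => ?_⟩
  obtain ⟨w, rfl⟩ := hsurj i
  simpa only [comp_apply, e.apply_eq_iff_eq, s, colorRefineSetoid_mk_eq_iff] using h w

theorem wlEquiv_iff_exists_isStableColoring (G H : FeaturedGraph n d) :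
    WLEquiv G H ↔ ∃ (k : ℕ) (c : Fin n ⊕ Fin n → Fin k), Surjective c ∧
      IsStableColoring (sumNbrs G.A H.A) (Sum.elim G.X H.X) c ∧ IsBalanced c :=
  ⟨exists_isStableColoring_of_wlEquiv,
    fun ⟨_, _, _, hc, hbal⟩ => wlEquiv_of_isStableColoring hc hbal⟩

end DisjointUnion

section CommonStablePartition

variable {n d : ℕ} (G H : FeaturedGraph n d)

theorem isStablePartition_fibers_iff {k : ℕ} (p : Fin n → Fin k) :
    IsStablePartition G (fun t => ({i | p i = t} : Finset (Fin n))) ↔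
      Surjective p ∧ IsStableColoring (nbrs G.A) G.X p := by
  simp only [IsStablePartition, Finset.Nonempty, mem_filter, mem_univ, true_and, existsUnique_eq',
    implies_true, inter_filter, inter_univ, Surjective, IsStableColoring, and_congr_right_iff]
  exact fun _ =>
    ⟨fun h u v huv => h _ u rfl v huv.symm, fun h t u hu v hv => h u v (hu.trans hv.symm)⟩

def IsCommonStablePartition {k : ℕ} (P Q : Fin k → Finset (Fin n)) : Prop :=
  IsStablePartition G P ∧ IsStablePartition H Q ∧
    (∀ t, (P t).card = (Q t).card) ∧
    (∀ t, ∀ u ∈ P t, ∀ v ∈ Q t, G.X u = H.X v) ∧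
    (∀ t l, ∀ u ∈ P t, ∀ v ∈ Q t, (nbrs G.A u ∩ P l).card = (nbrs H.A v ∩ Q l).card)

theorem isCommonStablePartition_fibers_iff {k : ℕ} (p q : Fin n → Fin k) :
    IsCommonStablePartition G H (fun t => ({i | p i = t} : Finset (Fin n)))
        (fun t => {j | q j = t}) ↔
      Surjective p ∧ Surjective q ∧
        IsStableColoring (sumNbrs G.A H.A) (Sum.elim G.X H.X) (Sum.elim p q) ∧
        IsBalanced (Sum.elim p q) := by
  simp only [IsCommonStablePartition, isStablePartition_fibers_iff, isStableColoring_sumElim_iff,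
    IsBalanced, Sum.elim_inl, Sum.elim_inr, mem_filter, mem_univ, true_and, inter_filter,
    inter_univ]
  constructor
  · rintro ⟨⟨hp, hPP⟩, ⟨hq, hQQ⟩, hbal, hX, hN⟩
    exact ⟨hp, hq, ⟨hPP, hQQ, fun u v huv => ⟨hX _ u huv v rfl, fun l => hN _ l u huv v rfl⟩⟩,
      hbal⟩
  · rintro ⟨hp, hq, ⟨hPP, hQQ, hPQ⟩, hbal⟩
    exact ⟨⟨hp, hPP⟩, ⟨hq, hQQ⟩, hbal, fun t u hu v hv => (hPQ u v (hu.trans hv.symm)).1,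
      fun t l u hu v hv => (hPQ u v (hu.trans hv.symm)).2 l⟩

theorem exists_isCommonStablePartition_iff :
    (∃ (k : ℕ) (P Q : Fin k → Finset (Fin n)), IsCommonStablePartition G H P Q) ↔
      ∃ (k : ℕ) (c : Fin n ⊕ Fin n → Fin k), Surjective c ∧
        IsStableColoring (sumNbrs G.A H.A) (Sum.elim G.X H.X) c ∧ IsBalanced c := by
  constructor
  · rintro ⟨k, P, Q, hPQ⟩
    obtain ⟨p, rfl⟩ := exists_eq_fibers hPQ.1.2.1
    obtain ⟨q, rfl⟩ := exists_eq_fibers hPQ.2.1.2.1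
    obtain ⟨hp, -, hc, hbal⟩ := (isCommonStablePartition_fibers_iff G H p q).1 hPQ
    exact ⟨k, _, fun t => let ⟨i, hi⟩ := hp t; ⟨.inl i, hi⟩, hc, hbal⟩
  · rintro ⟨k, c, hsurj, hc, hbal⟩
    refine ⟨k, _, _, (isCommonStablePartition_fibers_iff G H (c ∘ .inl) (c ∘ .inr)).2 ?_⟩
    obtain ⟨hinl, hinr⟩ := hbal.surjective_comp_inl_and_inr hsurj
    rw [Sum.elim_comp_inl_inr]
    exact ⟨hinl, hinr, hc, hbal⟩

end CommonStablePartition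

/-- Two featured graphs are 1-WL equivalent iff they admit a common stable
partition. -/
theorem wlEquiv_iff_commonStablePartition {n d : ℕ} (G H : FeaturedGraph n d) :
    WLEquiv G H ↔
      ∃ (k : ℕ) (P Q : Fin k → Finset (Fin n)),
        IsStablePartition G P ∧ IsStablePartition H Q ∧
        (∀ t, (P t).card = (Q t).card) ∧
        (∀ t, ∀ u ∈ P t, ∀ v ∈ Q t, G.X u = H.X v) ∧
        (∀ t l, ∀ u ∈ P t, ∀ v ∈ Q t,
          (nbrs G.A u ∩ P l).card = (nbrs H.A v ∩ Q l).card) :=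
  (wlEquiv_iff_exists_isStableColoring G H).trans (exists_isCommonStablePartition_iff G H).symm
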